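/- Let C be a definable set and s > 0. Then every definable family of pointwise bounded functions {f_t : C → M}_{0<t<s} is pointwise convergent. -/

import Mathlib

open Set

/-- The projection of `M^{m+n}` onto the first `m` coordinates. -/
def pFst {M : Type*} {m n : ℕ} (z : Fin (m + n) → M) : Fin m → M :=
  fun i => z (Fin.castAdd n i)

/-- The projection of `M^{m+n}` onto the last `n` coordinates. -/
def pSnd {M : Type*} {m n : ℕ} (z : Fin (m + n) → M) : Fin n → M :=
  fun j => z (Fin.natAdd m j)

/-- The family of sets definable with parameters in an expansion `𝓜 = (M,<,…)` of a
linear order: a van den Dries-style structure on `M` containing the graph of `<`. -/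
structure OrdStruc (M : Type*) [LinearOrder M] where
  defin : ∀ {n : ℕ}, Set (Fin n → M) → Prop
  defin_union : ∀ {n : ℕ} {A B : Set (Fin n → M)}, defin A → defin B → defin (A ∪ B)
  defin_compl : ∀ {n : ℕ} {A : Set (Fin n → M)}, defin A → defin Aᶜ
  defin_empty : ∀ {n : ℕ}, defin (∅ : Set (Fin n → M))
  defin_cylinder : ∀ {n : ℕ} {A : Set (Fin n → M)}, defin A →
    defin {z : Fin (n + 1) → M | Fin.init z ∈ A}
  defin_proj : ∀ {n : ℕ} {A : Set (Fin (n + 1) → M)}, defin A →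
    defin ((fun z : Fin (n + 1) → M => Fin.init z) '' A)
  defin_perm : ∀ {n : ℕ} (σ : Equiv.Perm (Fin n)) {A : Set (Fin n → M)}, defin A →
    defin {z : Fin n → M | z ∘ σ ∈ A}
  defin_lt : defin {z : Fin 2 → M | z 0 < z 1}
  defin_eq : defin {z : Fin 2 → M | z 0 = z 1}
  defin_const : ∀ a : M, defin {z : Fin 1 → M | z 0 = a}

/-- The definable sets of an expansion `𝓜 = (M,<,0,+,…)` of an ordered abelian group. -/
structure GrpStruc (M : Type*) [AddCommGroup M] [LinearOrder M] [IsOrderedAddMonoid M] extends OrdStruc M where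
  defin_add : defin {z : Fin 3 → M | z 0 + z 1 = z 2}

/-- The definable sets of an expansion `𝓕 = (F,<,+,0,·,1,…)` of an ordered field. -/
structure FieldStruc (M : Type*) [Field M] [LinearOrder M] [IsStrictOrderedRing M] extends GrpStruc M where
  defin_mul : defin {z : Fin 3 → M | z 0 * z 1 = z 2}

namespace OrdStruc

variable {M : Type*} [LinearOrder M]

/-- A subset of `M` is definable. -/
def defin1 (S : OrdStruc M) (A : Set M) : Prop :=
  S.defin {z : Fin 1 → M | z 0 ∈ A}

/-- The function `f : C → M`, `C ⊆ M^m`, is definable: its graph over `C` is definable. -/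
def DefinableFunOn (S : OrdStruc M) {m : ℕ} (C : Set (Fin m → M))
    (f : (Fin m → M) → M) : Prop :=
  S.defin {z : Fin (m + 1) → M | Fin.init z ∈ C ∧ z (Fin.last m) = f (Fin.init z)}

/-- The map `f : C → M^k`, `C ⊆ M^m`, is definable: its graph over `C` is definable. -/
def DefinableMapOn (S : OrdStruc M) {m k : ℕ} (C : Set (Fin m → M))
    (f : (Fin m → M) → Fin k → M) : Prop :=
  S.defin {z : Fin (m + k) → M | pFst z ∈ C ∧ pSnd z = f (pFst z)}

/-- The two-variable function `f : C × P → M` is definable. -/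
def DefinableFun2On (S : OrdStruc M) {m n : ℕ} (C : Set (Fin m → M))
    (P : Set (Fin n → M)) (f : (Fin m → M) → (Fin n → M) → M) : Prop :=
  S.defin {z : Fin (m + n + 1) → M |
    pFst (Fin.init z) ∈ C ∧ pSnd (Fin.init z) ∈ P ∧
    z (Fin.last (m + n)) = f (pFst (Fin.init z)) (pSnd (Fin.init z))}

/-- A definable family of functions `{f_t : C → M}_{t ∈ I}` given by `F(x,t) = f_t(x)`. -/
def DefinableFamilyOn (S : OrdStruc M) {m : ℕ} (C : Set (Fin m → M)) (I : Set M)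
    (F : (Fin m → M) → M → M) : Prop :=
  S.defin {z : Fin (m + 1 + 1) → M |
    Fin.init (Fin.init z) ∈ C ∧ Fin.init z (Fin.last m) ∈ I ∧
    z (Fin.last (m + 1)) = F (Fin.init (Fin.init z)) (Fin.init z (Fin.last m))}

end OrdStruc

/-- `𝓜` is definably complete: every definable subset of `M` has a supremum and an
infimum in `M ∪ {±∞}`. -/
def DefinablyComplete {M : Type*} [LinearOrder M] (S : OrdStruc M) : Prop :=
  ∀ A : Set M, S.defin1 A → A.Nonempty →
    (BddAbove A → ∃ a, IsLUB A a) ∧ (BddBelow A → ∃ a, IsGLB A a)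

/-- `𝓜` is locally o-minimal: for every definable `A ⊆ M` and every `a ∈ M` there is an
open interval `I ∋ a` such that `A ∩ I` is a finite union of points and open intervals. -/
def LocallyOMinimal {M : Type*} [LinearOrder M] (S : OrdStruc M) : Prop :=
  ∀ A : Set M, S.defin1 A → ∀ a : M, ∃ b c : M, b < a ∧ a < c ∧
    ∃ (s : Finset M) (t : Finset (M × M)),
      A ∩ Set.Ioo b c = (↑s : Set M) ∪ ⋃ p ∈ t, Set.Ioo p.1 p.2

/-- Open intervals of `M` (with possibly infinite endpoints). -/
def IsOpenInterval {M : Type*} [LinearOrder M] (I : Set M) : Prop :=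
  (∃ a b : M, I = Set.Ioo a b) ∨ (∃ a : M, I = Set.Ioi a) ∨
    (∃ b : M, I = Set.Iio b) ∨ I = Set.univ

/-- Open boxes in `M^n`: products of `n` open intervals. -/
def IsOpenBox {M : Type*} [LinearOrder M] {n : ℕ} (B : Set (Fin n → M)) : Prop :=
  ∃ I : Fin n → Set M, (∀ i, IsOpenInterval (I i)) ∧ B = Set.pi Set.univ I

/-- Some coordinate projection of `X ⊆ M^n` onto `M^d` has an image with
nonempty interior. -/
def HasDimAtLeast {M : Type*} [TopologicalSpace M] {n : ℕ}
    (X : Set (Fin n → M)) (d : ℕ) : Prop :=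
  ∃ ι : Fin d → Fin n, Function.Injective ι ∧
    (interior ((fun x : Fin n → M => x ∘ ι) '' X)).Nonempty

open Classical in
/-- The dimension of a subset of `M^n`: the largest `d` such that some coordinate
projection onto `M^d` has an image with nonempty interior; `⊥` (i.e. `-∞`) for `∅`. -/
noncomputable def sdim {M : Type*} [TopologicalSpace M] {n : ℕ}
    (X : Set (Fin n → M)) : WithBot ℕ :=
  if X.Nonempty then (Nat.findGreatest (HasDimAtLeast X) n : WithBot ℕ) else ⊥

/-- `|x| = max_{1 ≤ i ≤ n} |x_i|`. -/
def vnorm {M : Type*} [AddCommGroup M] [LinearOrder M] [IsOrderedAddMonoid M] {n : ℕ} (x : Fin n → M) : M :=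
  (List.ofFn fun i => |x i|).foldr max 0

/-- A subset of `M^n` is bounded. -/
def VBdd {M : Type*} [AddCommGroup M] [LinearOrder M] [IsOrderedAddMonoid M] {n : ℕ} (A : Set (Fin n → M)) : Prop :=
  ∃ r : M, ∀ x ∈ A, vnorm x < r

/-- The box `𝓑_n(x, ε) = {y : |x_i - y_i| < ε for all i}`. -/
def vball {M : Type*} [AddCommGroup M] [LinearOrder M] [IsOrderedAddMonoid M] {n : ℕ} (x : Fin n → M) (ε : M) :
    Set (Fin n → M) :=
  {y | ∀ i, |x i - y i| < ε}

/-- `fib(X, π, x) = {y ∈ M^e : (x,y) ∈ X}`, where `π : M^{d+e} → M^d` is the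
projection onto the first `d` coordinates. -/
def fibAt {M : Type*} {d e : ℕ} (X : Set (Fin (d + e) → M)) (x : Fin d → M) :
    Set (Fin e → M) :=
  {y | Fin.append x y ∈ X}

/-- `X ⊆ M^{d+e}` is a `π`-special submanifold, `π` the projection onto the first `d`
coordinates: for every `x ∈ M^d` there are an open box `U ∋ x` and mutually disjoint
open boxes `V_y` (`y ∈ fib(X,π,x)`) with `π(V_y) = U`, covering `X ∩ π⁻¹(U)` and such
that each `V_y ∩ X` is the graph of a continuous map on `U`. -/
def SpecialFirst {M : Type*} [LinearOrder M] [TopologicalSpace M] {d e : ℕ}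
    (X : Set (Fin (d + e) → M)) : Prop :=
  ∀ x : Fin d → M, ∃ U : Set (Fin d → M), IsOpenBox U ∧ x ∈ U ∧
    ∃ V : (Fin e → M) → Set (Fin (d + e) → M),
      (∀ y ∈ fibAt X x, IsOpenBox (V y)) ∧
      (∀ y ∈ fibAt X x, ∀ y' ∈ fibAt X x, y ≠ y' → V y ∩ V y' = ∅) ∧
      (∀ y ∈ fibAt X x, pFst '' V y = U) ∧
      (∀ z ∈ X, pFst z ∈ U → ∃ y ∈ fibAt X x, z ∈ V y) ∧
      (∀ y ∈ fibAt X x, ∃ g : (Fin d → M) → Fin e → M,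
        ContinuousOn g U ∧ V y ∩ X = (fun u => Fin.append u (g u)) '' U)

/-- `X ⊆ M^{d+e}` is a `π`-quasi-special submanifold: like `SpecialFirst` but only for
`x ∈ π(X)` and without the covering condition (2). -/
def QuasiSpecialFirst {M : Type*} [LinearOrder M] [TopologicalSpace M] {d e : ℕ}
    (X : Set (Fin (d + e) → M)) : Prop :=
  ∀ x ∈ pFst '' X, ∃ U : Set (Fin d → M), IsOpenBox U ∧ x ∈ U ∧
    ∃ V : (Fin e → M) → Set (Fin (d + e) → M),
      (∀ y ∈ fibAt X x, IsOpenBox (V y)) ∧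
      (∀ y ∈ fibAt X x, ∀ y' ∈ fibAt X x, y ≠ y' → V y ∩ V y' = ∅) ∧
      (∀ y ∈ fibAt X x, pFst '' V y = U) ∧
      (∀ y ∈ fibAt X x, ∃ g : (Fin d → M) → Fin e → M,
        ContinuousOn g U ∧ V y ∩ X = (fun u => Fin.append u (g u)) '' U)

/-- `C ⊆ M^n` is a special submanifold: it is a `π`-special submanifold for some
coordinate projection `π : M^n → M^d` (obtained by permuting coordinates and then
projecting onto the first `d` coordinates). -/
def IsSpecial {M : Type*} [LinearOrder M] [TopologicalSpace M] {n : ℕ}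
    (C : Set (Fin n → M)) : Prop :=
  ∃ (d e : ℕ) (σ : Fin n ≃ Fin (d + e)),
    SpecialFirst {z : Fin (d + e) → M | z ∘ σ ∈ C}

/-- `(X, π)` is locally bounded at `x ∈ π(X)`. -/
def LocBddAt {M : Type*} [AddCommGroup M] [LinearOrder M] [IsOrderedAddMonoid M] {d e : ℕ}
    (X : Set (Fin (d + e) → M)) (x : Fin d → M) : Prop :=
  ∃ U : Set (Fin d → M), IsOpenBox U ∧ VBdd U ∧ x ∈ U ∧ VBdd {z ∈ X | pFst z ∈ U}

/-- `(X, π, T, η, ρ)` is a special submanifold with a tubular neighborhood (the data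
`T`, `η`, `ρ` over the special submanifold `X`), `π` projection onto first `d` coords. -/
def TubularFirst {M : Type*} [AddCommGroup M] [LinearOrder M] [IsOrderedAddMonoid M] [TopologicalSpace M] {d e : ℕ}
    (S : GrpStruc M) (X T : Set (Fin (d + e) → M))
    (η : (Fin d → M) → M) (ρ : (Fin (d + e) → M) → Fin (d + e) → M) : Prop :=
  (sdim X = ((d + e : ℕ) : WithBot ℕ) ∧ IsOpen X ∧ T = X ∧ (∀ u, η u = 0) ∧
    ∀ z ∈ X, ρ z = z) ∨
  (sdim X < ((d + e : ℕ) : WithBot ℕ) ∧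
    -- (a)
    S.defin T ∧ IsOpen T ∧ T ⊆ {z | pFst z ∈ pFst '' X} ∧
    -- (b)
    S.toOrdStruc.DefinableFunOn (pFst '' X) η ∧ ContinuousOn η (pFst '' X) ∧
    (∀ u ∈ pFst '' X, 0 < η u) ∧ (∃ r : M, ∀ u ∈ pFst '' X, η u < r) ∧
    (∀ u ∈ pFst '' X, fibAt T u = ⋃ x ∈ fibAt X u, vball x (η u)) ∧
    (∀ u ∈ pFst '' X, ∀ x₁ ∈ fibAt X u, ∀ x₂ ∈ fibAt X u, x₁ ≠ x₂ →
      vball x₁ (η u) ∩ vball x₂ (η u) = ∅) ∧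
    -- (c)
    S.toOrdStruc.DefinableMapOn T ρ ∧ ContinuousOn ρ T ∧
    (∀ z ∈ T, ρ z ∈ X) ∧ (∀ z ∈ X, ρ z = z) ∧
    (∀ u : Fin d → M, ρ '' {z ∈ T | pFst z = u} ⊆ {z ∈ X | pFst z = u}) ∧
    (∀ u ∈ pFst '' X, ∀ x ∈ fibAt X u, ∀ y ∈ vball x (η u),
      ρ (Fin.append u y) = Fin.append u x))

/-!
Fix `x ∈ C` and write `f = F x`. The set of strict upper bounds of `f` on right neighbourhoods
of `0` is definable, nonempty and bounded below because `f` is bounded, so by definable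
completeness it has an infimum `L` (that is, `L = limsup_{t → 0⁺} f t`). Near `0⁺` we have
`f < L + ε` by the choice of `L`. By local o-minimality the definable set `{t | f t < L - ε}`
either contains or avoids a right neighbourhood of `0`; containing one would make `L - ε` an
upper bound near `0`, so `f ≥ L - ε` near `0⁺`. Thus `f` varies by less than `2ε` near `0⁺`.
-/

def upperBoundsNearZero {M : Type*} [LinearOrder M] [Zero M] (f : M → M) (s : M) : Set M :=
  {c | ∃ δ, 0 < δ ∧ δ ≤ s ∧ ∀ t ∈ Ioo 0 δ, f t < c}

namespace OrdStruc

variable {M : Type*} [LinearOrder M] (S : OrdStruc M) {n : ℕ}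

theorem defin_inter {A B : Set (Fin n → M)} (hA : S.defin A) (hB : S.defin B) :
    S.defin (A ∩ B) := by
  rw [← compl_compl (A ∩ B), compl_inter]
  exact S.defin_compl (S.defin_union (S.defin_compl hA) (S.defin_compl hB))

theorem defin_univ : S.defin (univ : Set (Fin n → M)) := by
  simpa using S.defin_compl (S.defin_empty (n := n))

theorem defin_comp_castAdd_mem {k : ℕ} {A : Set (Fin k → M)} (hA : S.defin A) :
    ∀ j : ℕ, S.defin {z : Fin (k + j) → M | z ∘ Fin.castAdd j ∈ A}
  | 0 => hA
  | j + 1 => S.defin_cylinder (defin_comp_castAdd_mem hA j)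

open Classical in
theorem defin_comp_mem_of_injective {k : ℕ} {ι : Fin k → Fin n} (hι : ι.Injective)
    {A : Set (Fin k → M)} (hA : S.defin A) : S.defin {z : Fin n → M | z ∘ ι ∈ A} := by
  obtain ⟨j, rfl⟩ : ∃ j, n = k + j := ⟨n - k, by have := Fin.le_of_injective ι hι; omega⟩
  let e : Fin k ≃ range (Fin.castAdd j : Fin k → Fin (k + j)) :=
    Equiv.ofInjective _ (Fin.castAdd_injective k j)
  let σ : Equiv.Perm (Fin (k + j)) :=
    (e.symm.trans (Equiv.ofInjective ι hι)).extendSubtype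
  have hσ : σ ∘ Fin.castAdd j = ι := by
    funext i
    simp only [Function.comp_apply, σ]
    rw [Equiv.extendSubtype_apply_of_mem _ _ ⟨i, rfl⟩]
    simp [e, Equiv.ofInjective_symm_apply]
  rw [← hσ]
  exact S.defin_perm σ (S.defin_comp_castAdd_mem hA j)

theorem defin_exists_snoc {A : Set (Fin (n + 1) → M)} (hA : S.defin A) :
    S.defin {z : Fin n → M | ∃ a, Fin.snoc z a ∈ A} := by
  convert S.defin_proj hA using 1
  ext z
  constructor
  · rintro ⟨a, ha⟩
    exact ⟨_, ha, Fin.init_snoc _ _⟩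
  · rintro ⟨w, hw, rfl⟩
    exact ⟨w (Fin.last n), by rwa [Fin.snoc_init_self]⟩

theorem defin_exists_append : ∀ {k : ℕ} {A : Set (Fin (n + k) → M)}, S.defin A →
    S.defin {z : Fin n → M | ∃ u : Fin k → M, Fin.append z u ∈ A}
  | 0, A, hA => by
    have hA' : {z : Fin n → M | ∃ u : Fin 0 → M, Fin.append z u ∈ A} = A := by
      ext z
      have (u : Fin 0 → M) : Fin.append z u = z := funext (Fin.append_left z u)
      simp [this]
    rwa [hA']
  | k + 1, A, hA => by
    have h := defin_exists_append (S.defin_exists_snoc hA)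
    convert h using 1
    ext z
    simp only [mem_ofPred_eq, ← Fin.append_snoc]
    constructor
    · rintro ⟨u, hu⟩
      exact ⟨Fin.init u, u (Fin.last k), by rwa [Fin.snoc_init_self]⟩
    · rintro ⟨u, a, hu⟩
      exact ⟨_, hu⟩

theorem defin_setOf_eq_const (i : Fin n) (a : M) : S.defin {z : Fin n → M | z i = a} :=
  S.defin_comp_mem_of_injective (ι := fun _ : Fin 1 => i)
    (Function.injective_of_subsingleton _) (S.defin_const a)

theorem defin_singleton : ∀ {n : ℕ} (x : Fin n → M), S.defin {x}
  | 0, x => by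
    rw [show ({x} : Set (Fin 0 → M)) = univ from eq_univ_of_forall fun y => Subsingleton.elim y x]
    exact S.defin_univ
  | n + 1, x => by
    have h := S.defin_inter (S.defin_cylinder (defin_singleton (Fin.init x)))
      (S.defin_setOf_eq_const (Fin.last n) (x (Fin.last n)))
    convert h using 1
    ext w
    simp only [mem_singleton_iff, mem_inter_iff, mem_ofPred_eq]
    refine ⟨by rintro rfl; simp, fun ⟨h₁, h₂⟩ => ?_⟩
    rw [← Fin.snoc_init_self w, ← Fin.snoc_init_self x, h₁, h₂]

theorem defin_fiber {k : ℕ} {A : Set (Fin (n + k) → M)} (hA : S.defin A) (x : Fin n → M) :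
    S.defin {y : Fin k → M | Fin.append x y ∈ A} := by
  have hflip (y : Fin k → M) (u : Fin n → M) : Fin.append y u ∘ finAddFlip = Fin.append u y := by
    funext i
    refine Fin.addCases (fun i => ?_) (fun i => ?_) i <;> simp
  have hright (y : Fin k → M) (u : Fin n → M) : Fin.append y u ∘ Fin.natAdd k = u :=
    funext (Fin.append_right y u)
  have h := S.defin_exists_append (S.defin_inter
    (S.defin_comp_mem_of_injective finAddFlip.injective hA)
    (S.defin_comp_mem_of_injective (Fin.natAdd_injective n k) (S.defin_singleton x)))
  convert h using 1
  ext y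
  simp [hflip, hright]

theorem defin_setOf_lt (i j : Fin n) : S.defin {z : Fin n → M | z i < z j} := by
  by_cases hij : i = j
  · simpa [hij] using S.defin_empty
  have hinj : (![i, j]).Injective := by
    intro a b hab
    fin_cases a <;> fin_cases b <;> simp_all [eq_comm]
  exact S.defin_comp_mem_of_injective hinj S.defin_lt

theorem defin_setOf_le (i j : Fin n) : S.defin {z : Fin n → M | z i ≤ z j} := by
  simpa [compl_ofPred] using S.defin_compl (S.defin_setOf_lt j i)

theorem defin_setOf_lt_const (i : Fin n) (a : M) : S.defin {z : Fin n → M | z i < a} := by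
  convert S.defin_exists_snoc (S.defin_inter (S.defin_setOf_lt i.castSucc (Fin.last n))
    (S.defin_setOf_eq_const (Fin.last n) a)) using 1
  ext z
  simp

theorem defin_setOf_const_lt (a : M) (i : Fin n) : S.defin {z : Fin n → M | a < z i} := by
  convert S.defin_exists_snoc (S.defin_inter (S.defin_setOf_lt (Fin.last n) i.castSucc)
    (S.defin_setOf_eq_const (Fin.last n) a)) using 1
  ext z
  simp

variable {S}

theorem DefinableFamilyOn.definableFunOn_apply {m : ℕ} {C : Set (Fin m → M)} {I : Set M}
    {F : (Fin m → M) → M → M} (hF : S.DefinableFamilyOn C I F) {x : Fin m → M} (hx : x ∈ C) :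
    S.DefinableFunOn {t : Fin 1 → M | t 0 ∈ I} (fun t => F x (t 0)) := by
  unfold DefinableFunOn
  convert S.defin_fiber (k := 2) hF x using 1
  ext w
  let z : Fin (m + 1 + 1) → M := Fin.append (n := 1 + 1) x w
  have hx' : Fin.init (Fin.init z) = x := funext (Fin.append_left x w)
  have hw₀ : Fin.init z (Fin.last m) = w 0 := Fin.append_right x w 0
  have hw₁ : z (Fin.last (m + 1)) = w 1 := Fin.append_right x w 1
  change _ ↔ Fin.init (Fin.init z) ∈ C ∧ Fin.init z (Fin.last m) ∈ I ∧
    z (Fin.last (m + 1)) = F (Fin.init (Fin.init z)) (Fin.init z (Fin.last m))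
  rw [hx', hw₀, hw₁]
  exact (and_iff_right hx).symm

theorem DefinableFunOn.defin1_setOf_lt {I : Set M} {f : M → M}
    (hf : S.DefinableFunOn {t : Fin 1 → M | t 0 ∈ I} (fun t => f (t 0))) (c : M) :
    S.defin1 {t | t ∈ I ∧ f t < c} := by
  unfold defin1
  convert S.defin_exists_snoc (S.defin_inter hf (S.defin_setOf_lt_const (Fin.last 1) c)) using 1
  ext v
  simp [Fin.snoc]

theorem DefinableFunOn.defin1_upperBoundsNearZero [Zero M] {f : M → M} {s : M}
    (hf : S.DefinableFunOn {t : Fin 1 → M | t 0 ∈ Ioo 0 s} (fun t => f (t 0))) :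
    S.defin1 (upperBoundsNearZero f s) := by
  have hD : upperBoundsNearZero f s =
      {c | ∃ δ, (0 < δ ∧ δ ≤ s) ∧ ∀ t ∈ Ioo 0 s, t < δ → f t < c} := by
    ext c
    refine exists_congr fun δ => ⟨fun ⟨h₀, hδ, h⟩ => ⟨⟨h₀, hδ⟩, fun t ht htδ => h t ⟨ht.1, htδ⟩⟩,
      fun ⟨⟨h₀, hδ⟩, h⟩ => ⟨h₀, hδ, fun t ht => h t ⟨ht.1, ht.2.trans_le hδ⟩ ht.2⟩⟩
  rw [hD]
  -- coordinates `(c, δ, t, y)`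
  have hQ : S.defin ({z : Fin 4 → M | z ∘ ![2, 3] ∈ _} ∩ {z | z 2 < z 1} ∩ {z | z 0 ≤ z 3}) :=
    S.defin_inter (S.defin_inter (S.defin_comp_mem_of_injective (by decide) hf)
      (S.defin_setOf_lt 2 1)) (S.defin_setOf_le 0 3)
  have hP := S.defin_inter (S.defin_inter (S.defin_setOf_const_lt 0 1)
    (S.defin_compl (S.defin_setOf_const_lt s 1)))
    (S.defin_compl (S.defin_exists_snoc (S.defin_exists_snoc hQ)))
  unfold defin1
  convert S.defin_exists_snoc hP using 1
  ext v
  simp [Fin.snoc, Fin.init]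

end OrdStruc

def HasTrivialRightGerm {M : Type*} [LinearOrder M] (a : M) (X : Set M) : Prop :=
  ∃ δ, a < δ ∧ (Ioo a δ ⊆ X ∨ Disjoint (Ioo a δ) X)

section RightGerm

variable {M : Type*} [LinearOrder M] {a : M} {X Y : Set M}

theorem HasTrivialRightGerm.union (hX : HasTrivialRightGerm a X) (hY : HasTrivialRightGerm a Y) :
    HasTrivialRightGerm a (X ∪ Y) := by
  obtain ⟨δ₁, h₁, hX⟩ := hX
  obtain ⟨δ₂, h₂, hY⟩ := hY
  have hsub₁ : Ioo a (min δ₁ δ₂) ⊆ Ioo a δ₁ := Ioo_subset_Ioo_right (min_le_left _ _)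
  have hsub₂ : Ioo a (min δ₁ δ₂) ⊆ Ioo a δ₂ := Ioo_subset_Ioo_right (min_le_right _ _)
  refine ⟨min δ₁ δ₂, lt_min h₁ h₂, ?_⟩
  rcases hX with hX | hX
  · exact Or.inl (hsub₁.trans (hX.trans subset_union_left))
  rcases hY with hY | hY
  · exact Or.inl (hsub₂.trans (hY.trans subset_union_right))
  · exact Or.inr ((hX.mono_left hsub₁).union_right (hY.mono_left hsub₂))

theorem HasTrivialRightGerm.of_inter_Ioo {b c : M} (hb : b < a) (hc : a < c)
    (h : HasTrivialRightGerm a (X ∩ Ioo b c)) : HasTrivialRightGerm a X := by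
  obtain ⟨δ, hδ, hX⟩ := h
  have hsub : Ioo a (min δ c) ⊆ Ioo a δ := Ioo_subset_Ioo_right (min_le_left _ _)
  refine ⟨min δ c, lt_min hδ hc, hX.imp (fun h => (hsub.trans h).trans inter_subset_left) ?_⟩
  refine fun h => disjoint_left.2 fun t ht htX => disjoint_left.1 h (hsub ht) ⟨htX, ?_, ?_⟩
  · exact hb.trans ht.1
  · exact ht.2.trans_le (min_le_right _ _)

variable [NoMaxOrder M]

theorem hasTrivialRightGerm_of_disjoint_Ioi (h : Disjoint (Ioi a) X) :
    HasTrivialRightGerm a X := by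
  obtain ⟨δ, hδ⟩ := exists_gt a
  exact ⟨δ, hδ, Or.inr (h.mono_left Ioo_subset_Ioi_self)⟩

theorem hasTrivialRightGerm_singleton (p : M) : HasTrivialRightGerm a {p} := by
  rcases lt_or_ge a p with hap | hpa
  · exact ⟨p, hap, Or.inr (disjoint_singleton_right.2 fun hp => hp.2.false)⟩
  · exact hasTrivialRightGerm_of_disjoint_Ioi
      (disjoint_singleton_right.2 fun hp => (not_lt.2 hpa) hp)

theorem hasTrivialRightGerm_Ioo (p q : M) : HasTrivialRightGerm a (Ioo p q) := by
  rcases lt_or_ge a p with hap | hpa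
  · exact ⟨p, hap, Or.inr (disjoint_left.2 fun t ht ht' => ht.2.not_gt ht'.1)⟩
  rcases lt_or_ge a q with haq | hqa
  · exact ⟨q, haq, Or.inl (Ioo_subset_Ioo_left hpa)⟩
  · exact hasTrivialRightGerm_of_disjoint_Ioi
      (disjoint_left.2 fun t ht ht' => (ht'.2.trans_le hqa).not_gt ht)

theorem hasTrivialRightGerm_biUnion {ι : Type*} (s : Finset ι) {X : ι → Set M}
    (h : ∀ i ∈ s, HasTrivialRightGerm a (X i)) : HasTrivialRightGerm a (⋃ i ∈ s, X i) := by
  classical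
  induction s using Finset.induction_on with
  | empty => simpa using hasTrivialRightGerm_of_disjoint_Ioi (disjoint_empty (Ioi a))
  | insert i s _ ih =>
    rw [Finset.set_biUnion_insert]
    exact (h i (Finset.mem_insert_self i s)).union
      (ih fun j hj => h j (Finset.mem_insert_of_mem hj))

theorem LocallyOMinimal.hasTrivialRightGerm {S : OrdStruc M} (hLO : LocallyOMinimal S)
    (hX : S.defin1 X) (a : M) : HasTrivialRightGerm a X := by
  obtain ⟨b, c, hb, hc, P, J, hXbc⟩ := hLO X hX a
  refine .of_inter_Ioo hb hc ?_
  rw [hXbc, ← biUnion_of_singleton (P : Set M), Finset.set_biUnion_coe]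
  exact (hasTrivialRightGerm_biUnion P fun p _ => hasTrivialRightGerm_singleton p).union
    (hasTrivialRightGerm_biUnion J fun p _ => hasTrivialRightGerm_Ioo p.1 p.2)

end RightGerm

section UpperBoundsNearZero

variable {M : Type*} [LinearOrder M] {f : M → M} {s L c : M}

theorem mem_upperBoundsNearZero_of_isGLB_lt [Zero M] (hL : IsGLB (upperBoundsNearZero f s) L)
    (hc : L < c) : c ∈ upperBoundsNearZero f s := by
  obtain ⟨d, ⟨δ, hδ, hδs, hfd⟩, -, hdc⟩ := hL.exists_between hc
  exact ⟨δ, hδ, hδs, fun t ht => (hfd t ht).trans hdc⟩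

theorem exists_forall_le_of_lt_isGLB [Zero M] (hs : 0 < s)
    (hL : IsGLB (upperBoundsNearZero f s) L) (hc : c < L)
    (hgerm : HasTrivialRightGerm 0 {t | t ∈ Ioo 0 s ∧ f t < c}) :
    ∃ δ, 0 < δ ∧ δ ≤ s ∧ ∀ t ∈ Ioo 0 δ, c ≤ f t := by
  obtain ⟨δ, hδ, hsub | hdisj⟩ := hgerm
  · have hmem : c ∈ upperBoundsNearZero f s := ⟨min δ s, lt_min hδ hs, min_le_right _ _,
      fun t ht => (hsub ⟨ht.1, ht.2.trans_le (min_le_left _ _)⟩).2⟩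
    exact absurd (hL.1 hmem) (not_le.2 hc)
  · refine ⟨min δ s, lt_min hδ hs, min_le_right _ _, fun t ht => not_lt.1 fun hft => ?_⟩
    exact disjoint_left.1 hdisj ⟨ht.1, ht.2.trans_le (min_le_left _ _)⟩
      ⟨⟨ht.1, ht.2.trans_le (min_le_right _ _)⟩, hft⟩

variable [AddCommGroup M] [IsOrderedAddMonoid M]

theorem abs_sub_lt_of_mem_Ico {a x y ε : M} (hx : x ∈ Ico a (a + ε)) (hy : y ∈ Ico a (a + ε)) :
    |x - y| < ε := by
  simpa using abs_sub_lt_of_nonneg_of_lt (sub_nonneg.2 hx.1) (sub_lt_iff_lt_add'.2 hx.2)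
    (sub_nonneg.2 hy.1) (sub_lt_iff_lt_add'.2 hy.2)

variable [DenselyOrdered M]

theorem exists_isGLB_upperBoundsNearZero {S : OrdStruc M} (hDC : DefinablyComplete S)
    (hD : S.defin1 (upperBoundsNearZero f s)) (hs : 0 < s) {N : M}
    (hN : ∀ t ∈ Ioo 0 s, |f t| < N) :
    ∃ L, IsGLB (upperBoundsNearZero f s) L := by
  have hNmem : N ∈ upperBoundsNearZero f s :=
    ⟨s, hs, le_rfl, fun t ht => (le_abs_self _).trans_lt (hN t ht)⟩
  have hbdd : -N ∈ lowerBounds (upperBoundsNearZero f s) := by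
    rintro c ⟨δ, hδ, hδs, hfc⟩
    obtain ⟨t, ht⟩ := exists_between hδ
    exact ((neg_lt_of_abs_lt (hN t ⟨ht.1, ht.2.trans_le hδs⟩)).trans (hfc t ht)).le
  exact (hDC _ hD ⟨N, hNmem⟩).2 ⟨-N, hbdd⟩

theorem exists_forall_abs_sub_lt_of_isGLB (hs : 0 < s) (hL : IsGLB (upperBoundsNearZero f s) L)
    (hgerm : ∀ c, HasTrivialRightGerm 0 {t | t ∈ Ioo 0 s ∧ f t < c}) {ε : M} (hε : 0 < ε) :
    ∃ s', 0 < s' ∧ s' ≤ s ∧ ∀ t ∈ Ioo 0 s', ∀ t' ∈ Ioo 0 s', |f t - f t'| < ε := by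
  obtain ⟨d, hd, hdε⟩ := exists_between hε
  have hlo : L - d < L := sub_lt_self L hd
  have hhi : L < L - d + ε := (sub_add_cancel L d).symm.trans_lt (by gcongr)
  obtain ⟨δ₁, hδ₁, hδ₁s, hup⟩ := mem_upperBoundsNearZero_of_isGLB_lt hL hhi
  obtain ⟨δ₂, hδ₂, -, hlow⟩ := exists_forall_le_of_lt_isGLB hs hL hlo (hgerm _)
  have hIco : ∀ t ∈ Ioo 0 (min δ₁ δ₂), f t ∈ Ico (L - d) (L - d + ε) := fun t ht =>
    ⟨hlow t ⟨ht.1, ht.2.trans_le (min_le_right _ _)⟩,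
      hup t ⟨ht.1, ht.2.trans_le (min_le_left _ _)⟩⟩
  exact ⟨min δ₁ δ₂, lt_min hδ₁ hδ₂, (min_le_left _ _).trans hδ₁s,
    fun t ht t' ht' => abs_sub_lt_of_mem_Ico (hIco t ht) (hIco t' ht')⟩

end UpperBoundsNearZero

theorem pointwise_bounded_definable_family_is_pointwise_convergent_general
    {M : Type*} [AddCommGroup M] [LinearOrder M] [IsOrderedAddMonoid M] [DenselyOrdered M] [Nontrivial M]
    (S : GrpStruc M) (hDC : DefinablyComplete S.toOrdStruc)
    (hLO : LocallyOMinimal S.toOrdStruc)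
    {m : ℕ} (C : Set (Fin m → M))
    (s : M) (hs : 0 < s) (F : (Fin m → M) → M → M)
    (hFdef : S.toOrdStruc.DefinableFamilyOn C (Set.Ioo 0 s) F)
    (hbdd : ∀ x ∈ C, ∃ N > (0 : M), ∀ t ∈ Set.Ioo (0 : M) s, |F x t| < N) :
    ∀ ε > (0 : M), ∀ x ∈ C, ∃ s' : M, 0 < s' ∧ s' ≤ s ∧
      ∀ t ∈ Set.Ioo (0 : M) s', ∀ t' ∈ Set.Ioo (0 : M) s', |F x t - F x t'| < ε := by
  intro ε hε x hx
  obtain ⟨N, -, hN⟩ := hbdd x hx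
  have hf := hFdef.definableFunOn_apply hx
  obtain ⟨L, hL⟩ := exists_isGLB_upperBoundsNearZero hDC hf.defin1_upperBoundsNearZero hs hN
  exact exists_forall_abs_sub_lt_of_isGLB hs hL
    (fun c => hLO.hasTrivialRightGerm (hf.defin1_setOf_lt c) 0) hε

/-- Lemma 3.6: a definable family of pointwise bounded functions is pointwise
convergent. -/
theorem pointwise_bounded_definable_family_is_pointwise_convergent
    {M : Type*} [AddCommGroup M] [LinearOrder M] [IsOrderedAddMonoid M] [DenselyOrdered M] [Nontrivial M]
    [TopologicalSpace M] [OrderTopology M]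
    (S : GrpStruc M) (hDC : DefinablyComplete S.toOrdStruc)
    (hLO : LocallyOMinimal S.toOrdStruc)
    {m : ℕ} (C : Set (Fin m → M)) (hCdef : S.defin C)
    (s : M) (hs : 0 < s) (F : (Fin m → M) → M → M)
    (hFdef : S.toOrdStruc.DefinableFamilyOn C (Set.Ioo 0 s) F)
    (hbdd : ∀ x ∈ C, ∃ N > (0 : M), ∀ t ∈ Set.Ioo (0 : M) s, |F x t| < N) :
    ∀ ε > (0 : M), ∀ x ∈ C, ∃ s' : M, 0 < s' ∧ s' ≤ s ∧
      ∀ t ∈ Set.Ioo (0 : M) s', ∀ t' ∈ Set.Ioo (0 : M) s', |F x t - F x t'| < ε :=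
  pointwise_bounded_definable_family_is_pointwise_convergent_general S hDC hLO C s hs F hFdef hbdd
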